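/- arXiv:2209.03786 — 8 statements merged into one kernel-verified Lean document; each statement's English description precedes it below -/
import Mathlib

section
/- Let ρ be a polymatroid on E. If X is a cyclic set of ρ, then the closure cl_ρ(X) = {i ∈ E : ρ(X ∪ {i}) = ρ(X)} is also a cyclic set of ρ. -/
open Finset
open scoped Classical

variable {α : Type*}

def IsPolymatroid [DecidableEq α] (ρ : Finset α → ℝ) : Prop :=
  ρ ∅ = 0 ∧ (∀ A B : Finset α, A ⊆ B → ρ A ≤ ρ B) ∧
    (∀ A B : Finset α, ρ (A ∪ B) + ρ (A ∩ B) ≤ ρ A + ρ B)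

/-- `A` is a flat of the polymatroid `ρ` (ground set = all of `α`). -/
def PmFlat [DecidableEq α] (ρ : Finset α → ℝ) (A : Finset α) : Prop :=
  ∀ i : α, i ∉ A → ρ A < ρ (insert i A)

/-- `A` is a cyclic set of the polymatroid `ρ`. -/
def PmCyclic [DecidableEq α] (ρ : Finset α → ℝ) (A : Finset α) : Prop :=
  ∀ i ∈ A, 0 < ρ {i} → ρ A < ρ (A.erase i) + ρ {i}

/-- The closure of `A`: the set `{i : ρ(A ∪ {i}) = ρ(A)}`. -/
noncomputable def pmCl [DecidableEq α] [Fintype α] (ρ : Finset α → ℝ) (A : Finset α) :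
    Finset α :=
  Finset.univ.filter (fun i => ρ (insert i A) = ρ A)

/-- The maximum cyclic subset of `A`: the union of all cyclic subsets of `A`. -/
noncomputable def pmCy [DecidableEq α] (ρ : Finset α → ℝ) (A : Finset α) : Finset α :=
  (A.powerset.filter (fun D => PmCyclic ρ D)).sup id


lemma pm_union_rank [DecidableEq α] (ρ : Finset α → ℝ) (hρ : IsPolymatroid ρ)
    (X S : Finset α) (hS : ∀ i ∈ S, ρ (insert i X) = ρ X) : ρ (X ∪ S) = ρ X := by
  classical
  induction S using Finset.induction_on with
  | empty => simp
  | @insert a S ha ih =>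
    have hIH : ρ (X ∪ S) = ρ X := ih (fun i hi => hS i (Finset.mem_insert_of_mem hi))
    have ha' : ρ (insert a X) = ρ X := hS a (Finset.mem_insert_self a S)
    have hsub := hρ.2.2 (X ∪ S) (insert a X)
    have hunion : (X ∪ S) ∪ insert a X = insert a (X ∪ S) := by
      ext x; simp [Finset.mem_insert, Finset.mem_union]; tauto
    have hX_sub : X ⊆ (X ∪ S) ∩ insert a X := by
      intro x hx
      simp [Finset.mem_inter, Finset.mem_union, Finset.mem_insert, hx]
    have hmono := hρ.2.1 _ _ hX_sub
    have hle : ρ (insert a (X ∪ S)) ≤ ρ X := by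
      rw [hunion] at hsub; linarith
    have hge : ρ X ≤ ρ (insert a (X ∪ S)) :=
      hρ.2.1 _ _ (fun x hx => Finset.mem_insert_of_mem (Finset.mem_union_left _ hx))
    have : X ∪ insert a S = insert a (X ∪ S) := by
      ext x; simp [Finset.mem_insert, Finset.mem_union]
    rw [this]; linarith

theorem closure_of_cyclic_is_cyclic [DecidableEq α] [Fintype α]
    (ρ : Finset α → ℝ) (hρ : IsPolymatroid ρ) {X : Finset α}
    (hX : PmCyclic ρ X) :
    PmCyclic ρ (pmCl ρ X) := by
  classical
  have hXsub : X ⊆ pmCl ρ X := by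
    intro i hi
    simp only [pmCl, Finset.mem_filter, Finset.mem_univ, true_and]
    rw [Finset.insert_eq_self.2 hi]
  have hClrank : ρ (pmCl ρ X) = ρ X := by
    have := pm_union_rank ρ hρ X (pmCl ρ X) (fun i hi => by
      simpa only [pmCl, Finset.mem_filter, Finset.mem_univ, true_and] using hi)
    rwa [Finset.union_eq_right.2 hXsub] at this
  intro i hi hpos
  by_cases hiX : i ∈ X
  · have h1 : ρ X < ρ (X.erase i) + ρ {i} := hX i hiX hpos
    have h2 : ρ (X.erase i) ≤ ρ ((pmCl ρ X).erase i) :=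
      hρ.2.1 _ _ (Finset.erase_subset_erase _ hXsub)
    rw [hClrank]; linarith
  · have h2 : X ⊆ (pmCl ρ X).erase i := by
      intro x hx
      exact Finset.mem_erase.2 ⟨fun h => hiX (h ▸ hx), hXsub hx⟩
    have := hρ.2.1 _ _ h2
    rw [hClrank]; linarith
end

section
/- Let ρ be a polymatroid on E and A ⊆ E. Define X = {i ∈ A : ρ({i}) > 0 and ρ(A) = ρ(A \ {i}) + ρ({i})}. Then A \ X is a cyclic set of ρ, every cyclic subset of A is contained in A \ X, and ρ(A) = ρ(A \ X) + Σ_{i ∈ X} ρ({i}). -/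
open Finset
open scoped Classical

variable {α : Type*}

section aux
variable [DecidableEq α] {ρ : Finset α → ℝ}

lemma pm_nonneg (hρ : IsPolymatroid ρ) (S : Finset α) : 0 ≤ ρ S := by
  have h := hρ.2.1 ∅ S (empty_subset S)
  rw [hρ.1] at h; exact h

lemma pm_sub1 (hρ : IsPolymatroid ρ) {S : Finset α} {i : α} (hi : i ∈ S) :
    ρ S ≤ ρ (S.erase i) + ρ {i} := by
  have h := hρ.2.2 (S.erase i) {i}
  have hu : S.erase i ∪ {i} = S := by
    ext x
    simp only [mem_union, mem_erase, mem_singleton]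
    constructor
    · rintro (⟨_, hx⟩ | rfl)
      · exact hx
      · exact hi
    · intro hx
      by_cases hxi : x = i
      · right; exact hxi
      · left; exact ⟨hxi, hx⟩
  have hv : S.erase i ∩ {i} = ∅ := by
    ext x; simp [mem_inter, mem_erase]
  rw [hu, hv, hρ.1] at h; linarith

lemma pm_sub2 (hρ : IsPolymatroid ρ) {S : Finset α} {i j : α}
    (hi : i ∈ S) (hj : j ∈ S) (hij : i ≠ j)
    (h1 : ρ S = ρ (S.erase i) + ρ {i}) (h2 : ρ S = ρ (S.erase j) + ρ {j}) :
    ρ (S.erase i) = ρ ((S.erase i).erase j) + ρ {j} := by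
  have hle := pm_sub1 hρ (mem_erase.mpr ⟨hij.symm, hj⟩ : j ∈ S.erase i)
  have h := hρ.2.2 (S.erase i) (S.erase j)
  have hu : S.erase i ∪ S.erase j = S := by
    ext x; simp only [mem_union, mem_erase]
    constructor
    · rintro (⟨_, hx⟩ | ⟨_, hx⟩) <;> exact hx
    · intro hx
      by_cases hxi : x = i
      · right; exact ⟨hxi ▸ hij, hx⟩
      · left; exact ⟨hxi, hx⟩
  have hv : S.erase i ∩ S.erase j = (S.erase i).erase j := by
    ext x; simp only [mem_inter, mem_erase]; tauto
  rw [hu, hv] at h; linarith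

lemma pm_sub3 (hρ : IsPolymatroid ρ) (T S : Finset α) :
    ρ S ≤ ρ (S \ T) + ∑ j ∈ T, ρ {j} := by
  induction T using Finset.induction_on with
  | empty => simp
  | @insert j T hj ih =>
    have hset : S \ insert j T = (S \ T).erase j := sdiff_insert S T j
    rw [hset, sum_insert hj]
    have hstep : ρ (S \ T) ≤ ρ ((S \ T).erase j) + ρ {j} := by
      by_cases hjs : j ∈ S \ T
      · exact pm_sub1 hρ hjs
      · rw [erase_eq_of_notMem hjs]
        have := pm_nonneg hρ ({j} : Finset α); linarith
    linarith

lemma pm_decomp (hρ : IsPolymatroid ρ) :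
    ∀ Y S : Finset α, Y ⊆ S → (∀ k ∈ Y, ρ S = ρ (S.erase k) + ρ {k}) →
      ρ S = ρ (S \ Y) + ∑ k ∈ Y, ρ {k} := by
  intro Y
  induction Y using Finset.induction_on with
  | empty => intro S _ _; simp
  | @insert j Y hj ih =>
    intro S hYS hk
    have hjS : j ∈ S := hYS (mem_insert_self j Y)
    have hjeq := hk j (mem_insert_self j Y)
    have hsub : Y ⊆ S.erase j := fun k hkY =>
      mem_erase.mpr ⟨fun h => hj (h ▸ hkY), hYS (mem_insert_of_mem hkY)⟩
    have hstep : ∀ k ∈ Y, ρ (S.erase j) = ρ ((S.erase j).erase k) + ρ {k} := by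
      intro k hkY
      exact pm_sub2 hρ hjS (hYS (mem_insert_of_mem hkY))
        (fun h => hj (h ▸ hkY)) hjeq (hk k (mem_insert_of_mem hkY))
    have := ih (S.erase j) hsub hstep
    have hset : S.erase j \ Y = S \ insert j Y := by
      ext x; simp only [mem_sdiff, mem_erase, mem_insert]; tauto
    rw [hset] at this
    rw [sum_insert hj]; linarith

end aux

theorem cyclic_part_of_set [DecidableEq α] [Fintype α]
    (ρ : Finset α → ℝ) (hρ : IsPolymatroid ρ) (A : Finset α) :
    PmCyclic ρ (A \ (A.filter (fun i => 0 < ρ {i} ∧ ρ A = ρ (A.erase i) + ρ {i}))) ∧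
    (∀ D : Finset α, D ⊆ A → PmCyclic ρ D →
      D ⊆ A \ (A.filter (fun i => 0 < ρ {i} ∧ ρ A = ρ (A.erase i) + ρ {i}))) ∧
    ρ A = ρ (A \ (A.filter (fun i => 0 < ρ {i} ∧ ρ A = ρ (A.erase i) + ρ {i}))) +
      ∑ i ∈ A.filter (fun i => 0 < ρ {i} ∧ ρ A = ρ (A.erase i) + ρ {i}), ρ {i} := by
  set X := A.filter (fun i => 0 < ρ {i} ∧ ρ A = ρ (A.erase i) + ρ {i}) with hX
  have hmemX : ∀ i, i ∈ X ↔ i ∈ A ∧ 0 < ρ {i} ∧ ρ A = ρ (A.erase i) + ρ {i} := by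
    intro i; rw [hX, mem_filter]
  have hXA : X ⊆ A := filter_subset _ _
  have h1 : ρ A = ρ (A \ X) + ∑ k ∈ X, ρ {k} :=
    pm_decomp hρ X A hXA (fun k hk => ((hmemX k).mp hk).2.2)
  refine ⟨?_, ?_, h1⟩
  · -- A \ X is cyclic
    intro i hi hpos
    rcases mem_sdiff.mp hi with ⟨hiA, hiX⟩
    by_contra hlt
    push_neg at hlt
    have hle := pm_sub1 hρ hi
    have heq : ρ (A \ X) = ρ ((A \ X).erase i) + ρ {i} := le_antisymm hle hlt
    have h3 := pm_sub3 hρ X (A.erase i)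
    have hset : A.erase i \ X = (A \ X).erase i := by
      ext x; simp only [mem_sdiff, mem_erase]; tauto
    rw [hset] at h3
    have hle2 := pm_sub1 hρ hiA
    have heqA : ρ A = ρ (A.erase i) + ρ {i} := by linarith
    exact hiX ((hmemX i).mpr ⟨hiA, hpos, heqA⟩)
  · -- every cyclic subset of A avoids X
    intro D hDA hD i hiD
    rw [mem_sdiff]
    refine ⟨hDA hiD, fun hiX => ?_⟩
    rcases (hmemX i).mp hiX with ⟨hiA, hpos, heqA⟩
    have hcy := hD i hiD hpos
    have h := hρ.2.2 D (A.erase i)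
    have hu : D ∪ A.erase i = A := by
      ext x; simp only [mem_union, mem_erase]
      constructor
      · rintro (hx | ⟨_, hx⟩)
        · exact hDA hx
        · exact hx
      · intro hx
        by_cases hxi : x = i
        · left; exact hxi ▸ hiD
        · right; exact ⟨hxi, hx⟩
    have hv : D ∩ A.erase i = D.erase i := by
      ext x; simp only [mem_inter, mem_erase]
      constructor
      · rintro ⟨hx, hxi, _⟩; exact ⟨hxi, hx⟩
      · rintro ⟨hxi, hx⟩; exact ⟨hx, hxi, hDA hx⟩
    rw [hu, hv] at h
    linarith
end

section
/- Let ρ be a polymatroid on E. If A is a flat of ρ, then its maximum cyclic subset cy_ρ(A) (the union of all cyclic subsets of A) is also a flat of ρ, hence a cyclic flat. -/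
open Finset
open scoped Classical

variable {α : Type*}

lemma pmCyclic_empty [DecidableEq α] (ρ : Finset α → ℝ) : PmCyclic ρ ∅ := by
  intro i hi; simp at hi

lemma pmCyclic_union [DecidableEq α] {ρ : Finset α → ℝ} (hρ : IsPolymatroid ρ)
    {D E : Finset α} (h1 : PmCyclic ρ D) (h2 : PmCyclic ρ E) : PmCyclic ρ (D ∪ E) := by
  obtain ⟨-, hmono, hsub⟩ := hρ
  intro i hi hpos
  rcases Finset.mem_union.1 hi with hiD | hiE
  · have key := hsub D ((D ∪ E).erase i)
    have hU : D ∪ (D ∪ E).erase i = D ∪ E := by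
      ext x
      simp only [Finset.mem_union, Finset.mem_erase]
      by_cases hx : x = i
      · subst hx; tauto
      · tauto
    have hI : D ∩ (D ∪ E).erase i = D.erase i := by
      ext x
      simp only [Finset.mem_inter, Finset.mem_union, Finset.mem_erase]
      tauto
    rw [hU, hI] at key
    have := h1 i hiD hpos
    linarith
  · have key := hsub E ((D ∪ E).erase i)
    have hU : E ∪ (D ∪ E).erase i = D ∪ E := by
      ext x
      simp only [Finset.mem_union, Finset.mem_erase]
      by_cases hx : x = i
      · subst hx; tauto
      · tauto
    have hI : E ∩ (D ∪ E).erase i = E.erase i := by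
      ext x
      simp only [Finset.mem_inter, Finset.mem_union, Finset.mem_erase]
      tauto
    rw [hU, hI] at key
    have := h2 i hiE hpos
    linarith

lemma pmCy_cyclic [DecidableEq α] {ρ : Finset α → ℝ} (hρ : IsPolymatroid ρ)
    (A : Finset α) : PmCyclic ρ (pmCy ρ A) := by
  apply Finset.sup_induction
  · exact pmCyclic_empty ρ
  · exact fun a ha b hb => pmCyclic_union hρ ha hb
  · intro D hD
    exact (Finset.mem_filter.1 hD).2

lemma pmCy_subset [DecidableEq α] (ρ : Finset α → ℝ) (A : Finset α) :
    pmCy ρ A ⊆ A := by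
  rw [← Finset.le_iff_subset]
  apply Finset.sup_le
  intro D hD
  exact Finset.mem_powerset.1 (Finset.mem_filter.1 hD).1

lemma subset_pmCy [DecidableEq α] (ρ : Finset α → ℝ) {A D : Finset α}
    (hD : PmCyclic ρ D) (hDA : D ⊆ A) : D ⊆ pmCy ρ A :=
  Finset.le_sup (f := id) (Finset.mem_filter.2 ⟨Finset.mem_powerset.2 hDA, hD⟩)

theorem cy_of_flat_is_cyclic_flat [DecidableEq α] [Fintype α]
    (ρ : Finset α → ℝ) (hρ : IsPolymatroid ρ) {A : Finset α}
    (hA : PmFlat ρ A) :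
    PmFlat ρ (pmCy ρ A) ∧ PmCyclic ρ (pmCy ρ A) := by
  obtain ⟨hemp, hmono, hsub⟩ := hρ
  set C := pmCy ρ A with hC
  have hCcyc : PmCyclic ρ C := pmCy_cyclic ⟨hemp, hmono, hsub⟩ A
  have hCA : C ⊆ A := pmCy_subset ρ A
  refine ⟨?_, hCcyc⟩
  intro i hiC
  have hle : ρ C ≤ ρ (insert i C) := hmono _ _ (Finset.subset_insert _ _)
  rcases lt_or_eq_of_le hle with h | heq
  · exact h
  exfalso
  by_cases hiA : i ∈ A
  · -- insert i C is cyclic, contradicting maximality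
    have hcyc : PmCyclic ρ (insert i C) := by
      intro j hj hjpos
      rcases Finset.mem_insert.1 hj with rfl | hjc
      · rw [Finset.erase_insert hiC, ← heq]
        linarith
      · have hij : j ≠ i := fun h => hiC (h ▸ hjc)
        have key := hsub (insert i (C.erase j)) C
        have hU : insert i (C.erase j) ∪ C = insert i C := by
          ext x
          simp only [Finset.mem_union, Finset.mem_insert, Finset.mem_erase]
          by_cases hx : x = j
          · subst hx; tauto
          · tauto
        have hI : insert i (C.erase j) ∩ C = C.erase j := by
          ext x
          simp only [Finset.mem_inter, Finset.mem_insert, Finset.mem_erase]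
          constructor
          · rintro ⟨h1 | h1, h2⟩
            · exact absurd (h1 ▸ h2) hiC
            · exact h1
          · tauto
        rw [hU, hI] at key
        have hcj := hCcyc j hjc hjpos
        rw [Finset.erase_insert_of_ne (Ne.symm hij)]
        linarith
    have : insert i C ⊆ C :=
      subset_pmCy ρ hcyc (Finset.insert_subset hiA hCA)
    exact hiC (this (Finset.mem_insert_self i C))
  · -- i ∉ A contradicts A being a flat
    have key := hsub (insert i C) A
    have hU : insert i C ∪ A = insert i A := by
      ext x
      simp only [Finset.mem_union, Finset.mem_insert]
      constructor
      · rintro ((rfl | h) | h)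
        · exact Or.inl rfl
        · exact Or.inr (hCA h)
        · exact Or.inr h
      · tauto
    have hI : insert i C ∩ A = C := by
      ext x
      simp only [Finset.mem_inter, Finset.mem_insert]
      constructor
      · rintro ⟨rfl | h, h2⟩
        · exact absurd h2 hiA
        · exact h
      · exact fun h => ⟨Or.inr h, hCA h⟩
    rw [hU, hI] at key
    have := hA i hiA
    linarith
end

section
/- Let ρ be a polymatroid on E and A, B ⊆ E. Then ρ(A) = ρ(B) + Σ_{i ∈ A \ B} ρ({i}) holds if and only if both (1) ρ(A) = ρ(A \ {i}) + ρ({i}) for all i ∈ A \ B, and (2) ρ(A ∩ B) = ρ(B). -/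
open Finset
open scoped Classical

variable {α : Type*}

lemma pm_ins [DecidableEq α] {ρ : Finset α → ℝ} (hρ : IsPolymatroid ρ)
    (S : Finset α) (i : α) : ρ (insert i S) ≤ ρ S + ρ {i} := by
  have h := hρ.2.2 S {i}
  have hm := hρ.2.1 ∅ (S ∩ {i}) (Finset.empty_subset _)
  have hins : S ∪ {i} = insert i S := by ext x; simp
  rw [hins] at h
  have h0 := hρ.1
  linarith

lemma pm_union_sum [DecidableEq α] {ρ : Finset α → ℝ} (hρ : IsPolymatroid ρ)
    (T S : Finset α) : ρ (S ∪ T) ≤ ρ S + ∑ i ∈ T, ρ {i} := by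
  induction T using Finset.induction_on with
  | empty => simp
  | @insert j T hj ih =>
      rw [Finset.union_insert, Finset.sum_insert hj]
      have := pm_ins hρ (S ∪ T) j
      linarith

lemma pm_erase [DecidableEq α] {ρ : Finset α → ℝ} (hρ : IsPolymatroid ρ)
    {A : Finset α} {i : α} (hi : i ∈ A) : ρ A ≤ ρ (A.erase i) + ρ {i} := by
  have := pm_ins hρ (A.erase i) i
  rwa [Finset.insert_erase hi] at this

lemma pm_back [DecidableEq α] {ρ : Finset α → ℝ} (hρ : IsPolymatroid ρ)
    {A B : Finset α} (h1 : ∀ i ∈ A \ B, ρ A = ρ (A.erase i) + ρ {i}) :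
    ∀ S ⊆ A \ B, ρ A = ρ (A \ S) + ∑ i ∈ S, ρ {i} := by
  intro S
  induction S using Finset.induction_on with
  | empty => simp
  | @insert j T hj ih =>
      intro hsub
      have hjAB : j ∈ A \ B := hsub (Finset.mem_insert_self j T)
      have hjA : j ∈ A := (Finset.mem_sdiff.mp hjAB).1
      have hT : T ⊆ A \ B := fun x hx => hsub (Finset.mem_insert_of_mem hx)
      have ihT := ih hT
      have hjAT : j ∈ A \ T := Finset.mem_sdiff.mpr ⟨hjA, hj⟩
      -- upper bound: ρ(A\T) ≤ ρ(A\insert j T) + ρ{j}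
      have he : (A \ T).erase j = A \ insert j T := by
        ext x; simp [Finset.mem_erase, and_comm]; tauto
      have hub : ρ (A \ T) ≤ ρ (A \ insert j T) + ρ {j} := by
        have := pm_erase hρ hjAT
        rwa [he] at this
      -- lower bound via submodularity
      have hsub2 := hρ.2.2 (A \ T) (A.erase j)
      have hu : (A \ T) ∪ A.erase j = A := by
        ext x
        by_cases hxj : x = j <;> simp [Finset.mem_erase, hxj, hj, hjA] <;> tauto
      have hint : (A \ T) ∩ A.erase j = A \ insert j T := by
        ext x; simp [Finset.mem_erase]; tauto
      rw [hu, hint] at hsub2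
      have hjstep := h1 j hjAB
      rw [Finset.sum_insert hj]
      linarith

theorem rank_eq_rank_add_sum_iff [DecidableEq α] [Fintype α]
    (ρ : Finset α → ℝ) (hρ : IsPolymatroid ρ) (A B : Finset α) :
    ρ A = ρ B + ∑ i ∈ A \ B, ρ {i} ↔
      ((∀ i ∈ A \ B, ρ A = ρ (A.erase i) + ρ {i}) ∧ ρ (A ∩ B) = ρ B) := by
  have hABB : ρ (A ∩ B) ≤ ρ B := hρ.2.1 _ _ (Finset.inter_subset_right)
  have hchain : ρ A ≤ ρ (A ∩ B) + ∑ i ∈ A \ B, ρ {i} := by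
    have := pm_union_sum hρ (A \ B) (A ∩ B)
    have hu : (A ∩ B) ∪ (A \ B) = A := by ext x; simp; tauto
    rwa [hu] at this
  constructor
  · intro h
    have hcap : ρ (A ∩ B) = ρ B := by linarith
    refine ⟨fun i hi => ?_, hcap⟩
    have hiA : i ∈ A := (Finset.mem_sdiff.mp hi).1
    have hiB : i ∉ B := (Finset.mem_sdiff.mp hi).2
    have hub : ρ A ≤ ρ (A.erase i) + ρ {i} := pm_erase hρ hiA
    have herase : ρ (A.erase i) ≤ ρ (A ∩ B) + ∑ j ∈ (A \ B).erase i, ρ {j} := by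
      have := pm_union_sum hρ ((A \ B).erase i) (A ∩ B)
      have hu : (A ∩ B) ∪ (A \ B).erase i = A.erase i := by
        ext x
        by_cases hxi : x = i <;> simp [Finset.mem_erase, hxi, hiB] <;> tauto
      rwa [hu] at this
    have hsum : ∑ j ∈ A \ B, ρ {j} = ρ {i} + ∑ j ∈ (A \ B).erase i, ρ {j} :=
      (Finset.add_sum_erase _ _ hi).symm
    linarith
  · rintro ⟨h1, h2⟩
    have := pm_back hρ h1 (A \ B) (Finset.Subset.refl _)
    rwa [Finset.sdiff_sdiff_self_left, h2] at this
end

section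
/- Let ρ be a polymatroid on E and A ⊆ E. If B and B' are cyclic flats with ρ(A) = ρ(B) + Σ_{i ∈ A \ B} ρ({i}) and ρ(A) = ρ(B') + Σ_{i ∈ A \ B'} ρ({i}), then (B, B') is a modular pair of flats: ρ(B) + ρ(B') = ρ(B ∪ B') + ρ(B ∩ B'). -/
open Finset
open scoped Classical

variable {α : Type*}

/-- Subadditivity over singletons: `ρ(X ∪ S) ≤ ρ(X) + ∑_{i ∈ S} ρ({i})`. -/
lemma pm_union_le [DecidableEq α] {ρ : Finset α → ℝ} (hρ : IsPolymatroid ρ)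
    (S X : Finset α) : ρ (X ∪ S) ≤ ρ X + ∑ i ∈ S, ρ {i} := by
  obtain ⟨h0, hmono, hsub⟩ := hρ
  induction S using Finset.induction_on with
  | empty => simp
  | @insert a S ha ih =>
    have h1 : X ∪ insert a S = (X ∪ S) ∪ {a} := by
      ext x; simp [or_comm, or_assoc, or_left_comm]
    have h2 : 0 ≤ ρ ((X ∪ S) ∩ {a}) := by
      have := hmono ∅ ((X ∪ S) ∩ {a}) (empty_subset _)
      linarith [h0 ▸ this]
    have h3 := hsub (X ∪ S) {a}
    rw [Finset.sum_insert ha, h1]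
    linarith

theorem mem_R_modular_pair [DecidableEq α] [Fintype α]
    (ρ : Finset α → ℝ) (hρ : IsPolymatroid ρ) (A : Finset α) {B B' : Finset α}
    (hBflat : PmFlat ρ B) (hBcyc : PmCyclic ρ B)
    (hB'flat : PmFlat ρ B') (hB'cyc : PmCyclic ρ B')
    (hBeq : ρ A = ρ B + ∑ i ∈ A \ B, ρ {i})
    (hB'eq : ρ A = ρ B' + ∑ i ∈ A \ B', ρ {i}) :
    ρ B + ρ B' = ρ (B ∪ B') + ρ (B ∩ B') := by
  obtain ⟨h0, hmono, hsub⟩ := hρ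
  -- submodularity gives one direction
  have hle : ρ (B ∪ B') + ρ (B ∩ B') ≤ ρ B + ρ B' := hsub B B'
  -- sum identity
  have hsdiff1 : A \ (B ∩ B') = (A \ B) ∪ (A \ B') := by
    ext x; simp; tauto
  have hsdiff2 : A \ (B ∪ B') = (A \ B) ∩ (A \ B') := by
    ext x; simp; tauto
  have hsum : (∑ i ∈ A \ B, ρ {i}) + ∑ i ∈ A \ B', ρ {i}
      = (∑ i ∈ A \ (B ∪ B'), ρ {i}) + ∑ i ∈ A \ (B ∩ B'), ρ {i} := by
    rw [hsdiff1, hsdiff2]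
    have := Finset.sum_union_inter (s₁ := A \ B) (s₂ := A \ B') (f := fun i => ρ {i})
    linarith
  -- ρ A ≤ ρ(B ∪ B') + ∑_{A \ (B ∪ B')} ρ{i}
  have hU : ρ A ≤ ρ (B ∪ B') + ∑ i ∈ A \ (B ∪ B'), ρ {i} := by
    have h1 : A ⊆ (B ∪ B') ∪ (A \ (B ∪ B')) := by
      intro x hx; simp [Finset.mem_union, Finset.mem_sdiff]; tauto
    exact le_trans (hmono _ _ h1) (pm_union_le ⟨h0, hmono, hsub⟩ _ _)
  have hC : ρ A ≤ ρ (B ∩ B') + ∑ i ∈ A \ (B ∩ B'), ρ {i} := by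
    have h1 : A ⊆ (B ∩ B') ∪ (A \ (B ∩ B')) := by
      intro x hx; simp [Finset.mem_union, Finset.mem_sdiff]; tauto
    exact le_trans (hmono _ _ h1) (pm_union_le ⟨h0, hmono, hsub⟩ _ _)
  -- combine
  linarith
end

section
/- For a matroid M on ground set E and any Y ⊆ E, the rank of Y equals min over cyclic flats Z of M of r(Z) + |Y \ Z|. -/
open Set

variable {α : Type*}

/-- A circuit of a matroid: a minimal dependent set. -/
def Matroid.IsCircuit' (M : Matroid α) (C : Set α) : Prop :=
  M.Dep C ∧ ∀ D ⊂ C, ¬ M.Dep D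

/-- A cyclic flat: a flat that is a union of circuits. -/
def Matroid.CyclicFlat (M : Matroid α) (Z : Set α) : Prop :=
  M.IsFlat Z ∧ ∀ e ∈ Z, ∃ C, M.IsCircuit' C ∧ C ⊆ Z ∧ e ∈ C

/-- The rank of a set: the largest cardinality of an independent subset. -/
noncomputable def Matroid.rank' (M : Matroid α) (Y : Set α) : ℕ :=
  sSup (Set.ncard '' {I : Set α | M.Indep I ∧ I ⊆ Y})

/-! The inequality `r Y ≤ r Z + |Y \ Z|` holds for every set `Z`, by monotonicity and
subadditivity of rank. For equality, let `F = cl Y` and let `D` be the set of coloops of `M ↾ F`.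
Every element of `Z = F \ D` lies in a circuit of `M ↾ F`, and circuits avoid coloops, so `Z` is
a union of circuits; it is a flat because deleting coloops commutes with closure. A coloop of
`M ↾ F` is in the closure of a set only if it belongs to it, so `D ⊆ Y` and `Y \ Z = D`. Finally
coloops can be added to any independent set, so `r F = r Z + |D|`. -/

namespace Matroid

variable {M : Matroid α} {C F R : Set α}

lemma isCircuit'_iff_isCircuit : M.IsCircuit' C ↔ M.IsCircuit C := by
  rw [IsCircuit', isCircuit_def, minimal_iff_forall_ssubset]

lemma cast_rank'_eq_eRk [M.RankFinite] (X : Set α) : (M.rank' X : ℕ∞) = M.eRk X := by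
  obtain ⟨I, hI⟩ := M.exists_isBasis' X
  have hmax : IsGreatest (ncard '' {J | M.Indep J ∧ J ⊆ X}) I.ncard := by
    refine ⟨⟨I, ⟨hI.indep, hI.subset⟩, rfl⟩, ?_⟩
    rintro _ ⟨J, ⟨hJ, hJX⟩, rfl⟩
    rw [← Nat.cast_le (α := ℕ∞), hJ.finite.cast_ncard_eq, hI.indep.finite.cast_ncard_eq,
      hI.encard_eq_eRk]
    exact hJ.encard_le_eRk_of_subset hJX
  rw [rank', hmax.csSup_eq, hI.indep.finite.cast_ncard_eq, hI.encard_eq_eRk]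

lemma eRk_le_eRk_add_encard_sdiff (M : Matroid α) (X Y : Set α) :
    M.eRk X ≤ M.eRk Y + (X \ Y).encard :=
  (M.eRk_mono (subset_sdiff_union X Y)).trans
    ((M.eRk_union_le_encard_add_eRk _ _).trans_eq (add_comm _ _))

lemma eRk_sdiff_restrict_coloops_add_encard (hR : R ⊆ M.E) :
    M.eRk (R \ (M ↾ R).coloops) + (M ↾ R).coloops.encard = M.eRk R := by
  have hD : (M ↾ R).coloops ⊆ R := (M ↾ R).coloops_subset_ground
  refine le_antisymm ?_ ?_
  · obtain ⟨K, hK⟩ := M.exists_isBasis (R \ (M ↾ R).coloops) (sdiff_subset.trans hR)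
    have hKD : M.Indep (K ∪ (M ↾ R).coloops) :=
      (restrict_indep_iff.1 ((union_indep_iff_indep_of_subset_coloops subset_rfl).2
        (restrict_indep_iff.2 ⟨hK.indep, hK.subset.trans sdiff_subset⟩))).1
    rw [← hK.encard_eq_eRk, ← encard_union_eq (disjoint_sdiff_left.mono_left hK.subset)]
    exact hKD.encard_le_eRk_of_subset (union_subset (hK.subset.trans sdiff_subset) hD)
  · have h := M.eRk_le_eRk_add_encard_sdiff R (R \ (M ↾ R).coloops)
    rwa [sdiff_sdiff_cancel_left hD] at h

lemma restrict_closure_coloops_subset (M : Matroid α) (X : Set α) :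
    (M ↾ M.closure X).coloops ⊆ X := by
  intro e he
  have hcl : (M ↾ M.closure X).closure (X ∩ M.E) = M.closure X := by
    rw [restrict_closure_eq _ (M.inter_ground_subset_closure X), closure_inter_ground,
      inter_self]
  have heX : e ∈ (M ↾ M.closure X).closure (X ∩ M.E) := by
    rw [hcl]; exact (M ↾ M.closure X).coloops_subset_ground he
  exact (IsColoop.mem_of_mem_closure he heX).1

lemma IsFlat.cyclicFlat_sdiff_restrict_coloops (hF : M.IsFlat F) :
    M.CyclicFlat (F \ (M ↾ F).coloops) := by
  have hFE : F ⊆ M.E := hF.subset_ground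
  refine ⟨isFlat_iff_closure_eq.2 ?_, fun e he ↦ ?_⟩
  · have hsub : M.closure (F \ (M ↾ F).coloops) ⊆ F :=
      (M.closure_subset_closure sdiff_subset).trans hF.closure.subset
    have h := (M ↾ F).closure_sdiff_eq_of_subset_coloops F subset_rfl
    rwa [restrict_closure_eq _ sdiff_subset, inter_eq_self_of_subset_left hsub,
      show (M ↾ F).closure F = F from (M ↾ F).closure_ground] at h
  obtain ⟨C, hC, heC⟩ := exists_mem_isCircuit_of_not_isColoop (M := M ↾ F) he.1 he.2
  obtain ⟨hCM, hCF⟩ := (restrict_isCircuit_iff hFE).1 hC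
  exact ⟨C, isCircuit'_iff_isCircuit.2 hCM, subset_sdiff.2 ⟨hCF, hC.disjoint_coloops⟩, heC⟩

end Matroid

/-- The rank of `Y` is `min { r Z + |Y \ Z| : Z a cyclic flat of M }`. -/
theorem rank_eq_min_over_cyclicFlats (M : Matroid α) [M.Finite]
    (Y : Set α) (hY : Y ⊆ M.E) :
    (∀ Z, M.CyclicFlat Z → M.rank' Y ≤ M.rank' Z + (Y \ Z).ncard) ∧
      ∃ Z, M.CyclicFlat Z ∧ M.rank' Y = M.rank' Z + (Y \ Z).ncard := by
  have hcast (Z : Set α) :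
      ((M.rank' Z + (Y \ Z).ncard : ℕ) : ℕ∞) = M.eRk Z + (Y \ Z).encard := by
    rw [Nat.cast_add, M.cast_rank'_eq_eRk, (M.set_finite _ (sdiff_subset.trans hY)).cast_ncard_eq]
  refine ⟨fun Z _ ↦ ?_, ?_⟩
  · rw [← Nat.cast_le (α := ℕ∞), hcast, M.cast_rank'_eq_eRk]
    exact M.eRk_le_eRk_add_encard_sdiff Y Z
  set D := (M.restrict (M.closure Y)).coloops
  have hYZ : Y \ (M.closure Y \ D) = D := by
    rw [sdiff_sdiff_right, sdiff_eq_empty.2 (M.subset_closure Y hY), empty_union,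
      inter_eq_self_of_subset_right (M.restrict_closure_coloops_subset Y)]
  refine ⟨M.closure Y \ D, (M.isFlat_closure Y).cyclicFlat_sdiff_restrict_coloops, ?_⟩
  rw [← Nat.cast_inj (R := ℕ∞), hcast, M.cast_rank'_eq_eRk, hYZ,
    Matroid.eRk_sdiff_restrict_coloops_add_encard (M.closure_subset_ground Y), M.eRk_closure_eq]
end

section
/- Let ρ be an integer polymatroid on E = [n] with set of bases B ⊆ ℕ^n. If u, v ∈ B and u_i > v_i for some i, then there exists j with u_j < v_j such that both u − e_i + e_j and v − e_j + e_i are in B (symmetric exchange). -/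
open Finset

def IsIntPolymatroid {n : ℕ} (ρ : Finset (Fin n) → ℕ) : Prop :=
  ρ ∅ = 0 ∧ (∀ A B : Finset (Fin n), A ⊆ B → ρ A ≤ ρ B) ∧
    (∀ A B : Finset (Fin n), ρ (A ∪ B) + ρ (A ∩ B) ≤ ρ A + ρ B)

/-- `u` is a basis of the integer polymatroid `ρ`. -/
def IsBasisN {n : ℕ} (ρ : Finset (Fin n) → ℕ) (u : Fin n → ℕ) : Prop :=
  (∀ X : Finset (Fin n), ∑ i ∈ X, u i ≤ ρ X) ∧ (∑ i, u i = ρ Finset.univ)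

/-- Tight sets of an independent vector are closed under union and intersection. -/
lemma tight_union_inter {n : ℕ} {ρ : Finset (Fin n) → ℕ}
    (hsub : ∀ A B : Finset (Fin n), ρ (A ∪ B) + ρ (A ∩ B) ≤ ρ A + ρ B)
    {u : Fin n → ℕ} (hI : ∀ X : Finset (Fin n), ∑ i ∈ X, u i ≤ ρ X)
    {X Y : Finset (Fin n)} (hX : ∑ i ∈ X, u i = ρ X) (hY : ∑ i ∈ Y, u i = ρ Y) :
    (∑ i ∈ X ∪ Y, u i = ρ (X ∪ Y)) ∧ (∑ i ∈ X ∩ Y, u i = ρ (X ∩ Y)) := by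
  have h1 := hI (X ∪ Y)
  have h2 := hI (X ∩ Y)
  have h3 := hsub X Y
  have h4 : ∑ i ∈ X ∪ Y, u i + ∑ i ∈ X ∩ Y, u i = ∑ i ∈ X, u i + ∑ i ∈ Y, u i :=
    Finset.sum_union_inter
  omega

/-- The key sum identity for the exchanged vector. -/
lemma exchange_sum {n : ℕ} (u : Fin n → ℕ) {i j : Fin n} (hij : j ≠ i) (hui : 1 ≤ u i)
    (X : Finset (Fin n)) :
    (∑ t ∈ X, (if t = i then u i - 1 else if t = j then u j + 1 else u t))
        + (if i ∈ X then 1 else 0)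
      = ∑ t ∈ X, u t + (if j ∈ X then 1 else 0) := by
  have hpt : ∀ t, (if t = i then u i - 1 else if t = j then u j + 1 else u t)
      + (if t = i then 1 else 0) = u t + (if t = j then 1 else 0) := by
    intro t
    rcases eq_or_ne t i with rfl | h1
    · rw [if_pos rfl, if_pos rfl, if_neg (fun h => hij h.symm)]
      omega
    · rw [if_neg h1, if_neg h1]
      rcases eq_or_ne t j with rfl | h2
      · rw [if_pos rfl, if_pos rfl]
      · rw [if_neg h2, if_neg h2]
  calc (∑ t ∈ X, (if t = i then u i - 1 else if t = j then u j + 1 else u t))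
        + (if i ∈ X then 1 else 0)
      = ∑ t ∈ X, ((if t = i then u i - 1 else if t = j then u j + 1 else u t)
          + (if t = i then 1 else 0)) := by
        rw [Finset.sum_add_distrib, Finset.sum_ite_eq' X i (fun _ => 1)]
    _ = ∑ t ∈ X, (u t + (if t = j then 1 else 0)) :=
        Finset.sum_congr rfl (fun t _ => hpt t)
    _ = ∑ t ∈ X, u t + (if j ∈ X then 1 else 0) := by
        rw [Finset.sum_add_distrib, Finset.sum_ite_eq' X j (fun _ => 1)]

/-- If no tight set contains `j` without `i`, then `u - e_i + e_j` is a basis. -/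
lemma exchange_basis {n : ℕ} {ρ : Finset (Fin n) → ℕ} {u : Fin n → ℕ}
    (huI : ∀ X : Finset (Fin n), ∑ i ∈ X, u i ≤ ρ X) (huT : ∑ i, u i = ρ Finset.univ)
    {i j : Fin n} (hij : j ≠ i) (hui : 1 ≤ u i)
    (hfree : ∀ X : Finset (Fin n), j ∈ X → i ∉ X → ∑ t ∈ X, u t ≠ ρ X) :
    IsBasisN ρ (fun t => if t = i then u i - 1 else if t = j then u j + 1 else u t) := by
  constructor
  · intro X
    show (∑ t ∈ X, (if t = i then u i - 1 else if t = j then u j + 1 else u t)) ≤ ρ X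
    have hk := exchange_sum u hij hui X
    have hle := huI X
    by_cases hiX : i ∈ X <;> by_cases hjX : j ∈ X
    · rw [if_pos hiX, if_pos hjX] at hk; omega
    · rw [if_pos hiX, if_neg hjX] at hk; omega
    · rw [if_neg hiX, if_pos hjX] at hk
      have := hfree X hjX hiX
      omega
    · rw [if_neg hiX, if_neg hjX] at hk; omega
  · show (∑ t : Fin n, (if t = i then u i - 1 else if t = j then u j + 1 else u t))
        = ρ Finset.univ
    have hk := exchange_sum u hij hui Finset.univ
    rw [if_pos (Finset.mem_univ i), if_pos (Finset.mem_univ j)] at hk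
    omega

/-- Symmetric exchange for bases of an integer polymatroid. -/
theorem basis_symmetric_exchange {n : ℕ} (ρ : Finset (Fin n) → ℕ)
    (hρ : IsIntPolymatroid ρ) {u v : Fin n → ℕ}
    (hu : IsBasisN ρ u) (hv : IsBasisN ρ v) {i : Fin n} (hi : v i < u i) :
    ∃ j : Fin n, u j < v j ∧
      IsBasisN ρ (fun t => if t = i then u i - 1 else if t = j then u j + 1 else u t) ∧
      IsBasisN ρ (fun t => if t = j then v j - 1 else if t = i then v i + 1 else v t) := by
  obtain ⟨hρ0, hmono, hsub⟩ := hρ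
  obtain ⟨huI, huT⟩ := hu
  obtain ⟨hvI, hvT⟩ := hv
  classical
  -- Xs : union of all u-tight sets avoiding i
  set T : Finset (Finset (Fin n)) :=
    Finset.univ.powerset.filter (fun X => (∑ t ∈ X, u t = ρ X) ∧ i ∉ X) with hT
  set Xs : Finset (Fin n) := T.sup id with hXs
  have hXstight : ∑ t ∈ Xs, u t = ρ Xs := by
    rw [hXs]
    refine Finset.sup_induction (p := fun X => ∑ t ∈ X, u t = ρ X) ?_ ?_ ?_
    · simpa using hρ0.symm
    · intro a ha b hb
      exact (tight_union_inter hsub huI ha hb).1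
    · intro X hX
      exact (Finset.mem_filter.mp hX).2.1
  have hiXs : i ∉ Xs := by
    intro hmem
    rw [hXs] at hmem
    obtain ⟨X, hX, hiX⟩ := Finset.mem_sup.mp hmem
    exact (Finset.mem_filter.mp hX).2.2 hiX
  have hXsub : ∀ X : Finset (Fin n), (∑ t ∈ X, u t = ρ X) → i ∉ X → X ⊆ Xs := by
    intro X h1 h2
    exact Finset.le_sup (f := id)
      (Finset.mem_filter.mpr ⟨Finset.mem_powerset.mpr (Finset.subset_univ X), h1, h2⟩)
  -- A : intersection of all v-tight sets containing i
  set S : Finset (Finset (Fin n)) :=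
    Finset.univ.powerset.filter (fun X => (∑ t ∈ X, v t = ρ X) ∧ i ∈ X) with hS
  set A : Finset (Fin n) := S.inf id with hA
  have hAtight : ∑ t ∈ A, v t = ρ A := by
    rw [hA]
    refine Finset.inf_induction (p := fun X => ∑ t ∈ X, v t = ρ X) ?_ ?_ ?_
    · exact hvT
    · intro a ha b hb
      exact (tight_union_inter hsub hvI ha hb).2
    · intro X hX
      exact (Finset.mem_filter.mp hX).2.1
  have hiA : i ∈ A := by
    rw [hA, Finset.mem_inf]
    intro X hX
    exact (Finset.mem_filter.mp hX).2.2
  have hAsub : ∀ X : Finset (Fin n), (∑ t ∈ X, v t = ρ X) → i ∈ X → A ⊆ X := by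
    intro X h1 h2
    exact Finset.inf_le (f := id)
      (Finset.mem_filter.mpr ⟨Finset.mem_powerset.mpr (Finset.subset_univ X), h1, h2⟩)
  -- find the exchange element j
  obtain ⟨j, hjA, hjXs, hjuv⟩ : ∃ j ∈ A, j ∉ Xs ∧ u j < v j := by
    by_contra hcon
    push_neg at hcon
    have hiD : i ∈ A \ Xs := Finset.mem_sdiff.mpr ⟨hiA, hiXs⟩
    have h1 : ∑ t ∈ A \ Xs, v t < ∑ t ∈ A \ Xs, u t := by
      refine Finset.sum_lt_sum ?_ ⟨i, hiD, hi⟩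
      intro t ht
      rcases Finset.mem_sdiff.mp ht with ⟨ht1, ht2⟩
      rcases eq_or_ne t i with rfl | hti
      · exact le_of_lt hi
      · exact hcon t ht1 ht2
    have e1 : ∑ t ∈ A ∪ Xs, u t ≤ ρ (A ∪ Xs) := huI _
    have e2 : ∑ t ∈ A ∩ Xs, v t ≤ ρ (A ∩ Xs) := hvI _
    have e3 := hsub A Xs
    have e6 : ∑ t ∈ A ∪ Xs, u t = ∑ t ∈ A \ Xs, u t + ∑ t ∈ Xs, u t := by
      rw [← Finset.sdiff_union_self_eq_union, Finset.sum_union Finset.sdiff_disjoint]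
    have e7 : ∑ t ∈ A ∩ Xs, v t + ∑ t ∈ A \ Xs, v t = ∑ t ∈ A, v t :=
      Finset.sum_inter_add_sum_sdiff _ _ _
    omega
  have hji : j ≠ i := by intro h; rw [h] at hjuv; omega
  have hui1 : 1 ≤ u i := by omega
  have hvj1 : 1 ≤ v j := by omega
  refine ⟨j, hjuv, ?_, ?_⟩
  · refine exchange_basis huI huT hji hui1 ?_
    intro X hjX hiX heq
    exact hjXs (hXsub X heq hiX hjX)
  · refine exchange_basis hvI hvT (Ne.symm hji) hvj1 ?_
    intro X hiX hjX heq
    exact hjX (hAsub X heq hiX hjA)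
end

section
/- Let L be a lattice of subsets of a finite set E containing ∅ and E and closed under intersection, and let σ: L → ℕ be submodular (σ(A ∨ B) + σ(A ∩ B) ≤ σ(A) + σ(B)) with σ(∅) = 0. Then the function r(Y) = min{σ(S) + |Y \ S| : S ∈ L} is the rank function of a matroid on E whose independent sets are exactly the I ⊆ E with |I ∩ S| ≤ σ(S) for all S ∈ L. -/
open Set

variable {α : Type*}

section Aux
variable [DecidableEq α]

/-- independence predicate -/
private def LInd (E : Finset α) (L : Finset (Finset α)) (σ : Finset α → ℕ) (I : Finset α) : Prop :=
  I ⊆ E ∧ ∀ S ∈ L, (I ∩ S).card ≤ σ S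

private lemma exists_join (E : Finset α) (L : Finset (Finset α))
    (hE : E ∈ L) (hsub : ∀ S ∈ L, S ⊆ E)
    (hinter : ∀ A ∈ L, ∀ B ∈ L, A ∩ B ∈ L)
    {A B : Finset α} (hA : A ∈ L) (hB : B ∈ L) :
    ∃ J ∈ L, A ∪ B ⊆ J ∧ ∀ S ∈ L, A ∪ B ⊆ S → J ⊆ S := by
  classical
  set F := L.filter (fun S => A ∪ B ⊆ S) with hF
  have hEF : E ∈ F := by
    simp only [hF, Finset.mem_filter]
    exact ⟨hE, Finset.union_subset (hsub A hA) (hsub B hB)⟩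
  have hne : F.Nonempty := ⟨E, hEF⟩
  refine ⟨F.inf' hne id, ?_, ?_, ?_⟩
  · exact Finset.inf'_mem (↑L : Set (Finset α))
      (fun x hx y hy => hinter x hx y hy) F hne id
      (fun S hS => (Finset.mem_filter.mp hS).1)
  · exact Finset.le_inf' hne id (fun S hS => (Finset.mem_filter.mp hS).2)
  · intro S hS hABS
    exact Finset.inf'_le id (Finset.mem_filter.mpr ⟨hS, hABS⟩)

private lemma tight_cover (E : Finset α) (L : Finset (Finset α))
    (hE : E ∈ L) (hempty : ∅ ∈ L) (hsub : ∀ S ∈ L, S ⊆ E)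
    (hinter : ∀ A ∈ L, ∀ B ∈ L, A ∩ B ∈ L)
    (σ : Finset α → ℕ) (hσ0 : σ ∅ = 0)
    (hsubmod : ∀ A ∈ L, ∀ B ∈ L, ∀ J ∈ L,
      ((A ∪ B ⊆ J ∧ ∀ S ∈ L, A ∪ B ⊆ S → J ⊆ S) →
        σ J + σ (A ∩ B) ≤ σ A + σ B))
    {I : Finset α} (hI : LInd E L σ I) (X : Finset α)
    (hX : ∀ x ∈ X, ∃ S ∈ L, x ∈ S ∧ (I ∩ S).card = σ S) :
    ∃ T ∈ L, X ⊆ T ∧ (I ∩ T).card = σ T := by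
  classical
  induction X using Finset.induction_on with
  | empty => exact ⟨∅, hempty, Finset.empty_subset _, by simp [hσ0]⟩
  | @insert x X hxX ih =>
    obtain ⟨T, hT, hXT, hTt⟩ := ih (fun y hy => hX y (Finset.mem_insert_of_mem hy))
    obtain ⟨S, hS, hxS, hSt⟩ := hX x (Finset.mem_insert_self _ _)
    obtain ⟨J, hJ, hTSJ, hJmin⟩ := exists_join E L hE hsub hinter hT hS
    have hTS : T ∩ S ∈ L := hinter T hT S hS
    have h1 : (I ∩ T).card + (I ∩ S).card = (I ∩ (T ∪ S)).card + (I ∩ (T ∩ S)).card := by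
      rw [Finset.inter_union_distrib_left, Finset.inter_inter_distrib_left]
      exact (Finset.card_union_add_card_inter _ _).symm
    have h2 : (I ∩ (T ∪ S)).card ≤ (I ∩ J).card :=
      Finset.card_le_card (Finset.inter_subset_inter (Finset.Subset.refl I) hTSJ)
    have h3 : (I ∩ J).card ≤ σ J := hI.2 J hJ
    have h4 : (I ∩ (T ∩ S)).card ≤ σ (T ∩ S) := hI.2 _ hTS
    have h5 : σ J + σ (T ∩ S) ≤ σ T + σ S := hsubmod T hT S hS J hJ ⟨hTSJ, hJmin⟩
    refine ⟨J, hJ, ?_, by omega⟩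
    exact Finset.insert_subset (hTSJ (Finset.mem_union_right _ hxS))
      (hXT.trans ((Finset.subset_union_left).trans hTSJ))

private lemma tight_of_not_ind (E : Finset α) (L : Finset (Finset α))
    (σ : Finset α → ℕ)
    {I : Finset α} (hI : LInd E L σ I) {x : α} (hx : x ∈ E)
    (h : ¬ LInd E L σ (insert x I)) :
    ∃ S ∈ L, x ∈ S ∧ (I ∩ S).card = σ S := by
  classical
  simp only [LInd, not_and, not_forall] at h
  obtain ⟨S, hS, hcard⟩ := h (Finset.insert_subset hx hI.1)
  push_neg at hcard
  have hxS : x ∈ S := by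
    by_contra hxS
    rw [Finset.insert_inter_of_notMem hxS] at hcard
    exact absurd (hI.2 S hS) (by omega)
  have h1 : (insert x I ∩ S).card ≤ (I ∩ S).card + 1 := by
    rw [Finset.insert_inter_of_mem hxS]
    exact Finset.card_insert_le _ _
  have h2 := hI.2 S hS
  exact ⟨S, hS, hxS, by omega⟩

private lemma lind_aug (E : Finset α) (L : Finset (Finset α))
    (hE : E ∈ L) (hempty : ∅ ∈ L) (hsub : ∀ S ∈ L, S ⊆ E)
    (hinter : ∀ A ∈ L, ∀ B ∈ L, A ∩ B ∈ L)
    (σ : Finset α → ℕ) (hσ0 : σ ∅ = 0)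
    (hsubmod : ∀ A ∈ L, ∀ B ∈ L, ∀ J ∈ L,
      ((A ∪ B ⊆ J ∧ ∀ S ∈ L, A ∪ B ⊆ S → J ⊆ S) →
        σ J + σ (A ∩ B) ≤ σ A + σ B))
    {I J : Finset α} (hI : LInd E L σ I) (hJ : LInd E L σ J)
    (hcard : I.card < J.card) :
    ∃ e ∈ J, e ∉ I ∧ LInd E L σ (insert e I) := by
  classical
  by_contra hcon
  push_neg at hcon
  have hX : ∀ x ∈ J \ I, ∃ S ∈ L, x ∈ S ∧ (I ∩ S).card = σ S := by
    intro x hx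
    rw [Finset.mem_sdiff] at hx
    exact tight_of_not_ind E L σ hI (hJ.1 hx.1) (hcon x hx.1 hx.2)
  obtain ⟨T, hT, hJIT, hTt⟩ := tight_cover E L hE hempty hsub hinter σ hσ0 hsubmod hI _ hX
  have h1 : (J ∩ T).card + (J \ T).card = J.card := Finset.card_inter_add_card_sdiff _ _
  have h2 : (J ∩ T).card ≤ (I ∩ T).card := by rw [hTt]; exact hJ.2 T hT
  have h3 : J \ T ⊆ I \ T := by
    intro y hy
    rw [Finset.mem_sdiff] at hy ⊢
    refine ⟨?_, hy.2⟩
    by_contra hyI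
    exact hy.2 (hJIT (Finset.mem_sdiff.mpr ⟨hy.1, hyI⟩))
  have h4 : (J \ T).card ≤ (I \ T).card := Finset.card_le_card h3
  have h5 : (I ∩ T).card + (I \ T).card = I.card := Finset.card_inter_add_card_sdiff _ _
  omega
end Aux

/-- Given a lattice `L` of subsets of `E` (containing `∅` and `E`, closed under
intersection, with joins given by least upper bounds in `L`) and a submodular
`σ : L → ℕ` with `σ ∅ = 0`, the function `Y ↦ min {σ S + |Y \ S| : S ∈ L}` is
the rank function of a matroid on `E` whose independent sets are exactly the
`I ⊆ E` with `|I ∩ S| ≤ σ S` for all `S ∈ L`. -/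
theorem matroid_of_lattice_submodular [DecidableEq α]
    (E : Finset α) (L : Finset (Finset α))
    (hE : E ∈ L) (hempty : ∅ ∈ L) (hsub : ∀ S ∈ L, S ⊆ E)
    (hinter : ∀ A ∈ L, ∀ B ∈ L, A ∩ B ∈ L)
    (σ : Finset α → ℕ) (hσ0 : σ ∅ = 0)
    (hsubmod : ∀ A ∈ L, ∀ B ∈ L, ∀ J ∈ L,
      ((A ∪ B ⊆ J ∧ ∀ S ∈ L, A ∪ B ⊆ S → J ⊆ S) →
        σ J + σ (A ∩ B) ≤ σ A + σ B)) :
    ∃ M : Matroid α, M.E = ↑E ∧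
      (∀ J : Set α, M.Indep J ↔
        ∃ I : Finset α, J = ↑I ∧ I ⊆ E ∧ ∀ S ∈ L, (I ∩ S).card ≤ σ S) ∧
      (∀ Y : Finset α, Y ⊆ E →
        (∀ S ∈ L, M.rank' ↑Y ≤ σ S + (Y \ S).card) ∧
        ∃ S ∈ L, M.rank' ↑Y = σ S + (Y \ S).card) := by
  classical
  have indep_empty : LInd E L σ ∅ :=
    ⟨Finset.empty_subset _, fun S hS => by simp⟩
  have indep_subset : ∀ ⦃I J : Finset α⦄, LInd E L σ J → I ⊆ J → LInd E L σ I := by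
    intro I J hJ hIJ
    exact ⟨hIJ.trans hJ.1, fun S hS =>
      le_trans (Finset.card_le_card (Finset.inter_subset_inter hIJ (Finset.Subset.refl S)))
        (hJ.2 S hS)⟩
  have indep_aug : ∀ ⦃I J : Finset α⦄, LInd E L σ I → LInd E L σ J → I.card < J.card →
      ∃ e ∈ J, e ∉ I ∧ LInd E L σ (insert e I) :=
    fun I J hI hJ h => lind_aug E L hE hempty hsub hinter σ hσ0 hsubmod hI hJ h
  have subset_ground : ∀ ⦃I : Finset α⦄, LInd E L σ I → (I : Set α) ⊆ ↑E :=
    fun I hI => Finset.coe_subset.mpr hI.1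
  set M := (IndepMatroid.ofFinset (↑E) (LInd E L σ)
      indep_empty indep_subset indep_aug subset_ground).matroid with hM
  have hME : M.E = ↑E := rfl
  have hIndep : ∀ J : Set α, M.Indep J ↔
      ∃ I : Finset α, J = ↑I ∧ I ⊆ E ∧ ∀ S ∈ L, (I ∩ S).card ≤ σ S := by
    intro J
    rw [hM, IndepMatroid.matroid_indep_iff, IndepMatroid.ofFinset_indep']
    constructor
    · intro h
      have hJE : J ⊆ ↑E := by
        intro x hx
        have := h {x} (by simpa using hx)
        exact (subset_ground this) (by simp)
      have hfin : J.Finite := E.finite_toSet.subset hJE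
      refine ⟨hfin.toFinset, by simp, ?_⟩
      have := h hfin.toFinset (by simp)
      exact ⟨this.1, this.2⟩
    · rintro ⟨I, rfl, hIE, hIσ⟩
      intro K hK
      exact indep_subset ⟨hIE, hIσ⟩ (Finset.coe_subset.mp hK)
  refine ⟨M, hME, hIndep, ?_⟩
  intro Y hY
  -- upper bound for all S
  have part1 : ∀ S ∈ L, M.rank' ↑Y ≤ σ S + (Y \ S).card := by
    intro S hS
    unfold Matroid.rank'
    apply csSup_le
    · exact ⟨0, ⟨∅, ⟨M.empty_indep, by simp⟩, by simp⟩⟩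
    · rintro n ⟨Iset, ⟨hIi, hIY⟩, rfl⟩
      obtain ⟨I, rfl, hIE, hIσ⟩ := (hIndep Iset).mp hIi
      have hIYf : I ⊆ Y := Finset.coe_subset.mp hIY
      rw [Set.ncard_coe_finset]
      have h1 : (I ∩ S).card + (I \ S).card = I.card := Finset.card_inter_add_card_sdiff _ _
      have h2 : (I \ S).card ≤ (Y \ S).card :=
        Finset.card_le_card (Finset.sdiff_subset_sdiff hIYf (Finset.Subset.refl _))
      have h3 := hIσ S hS
      omega
  refine ⟨part1, ?_⟩
  -- choose a maximum-cardinality independent subset B of Y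
  have hne : (Y.powerset.filter (fun I => LInd E L σ I)).Nonempty :=
    ⟨∅, by simp [indep_empty]⟩
  obtain ⟨B, hBmem, hBmax⟩ := Finset.exists_max_image _ Finset.card hne
  rw [Finset.mem_filter, Finset.mem_powerset] at hBmem
  obtain ⟨hBY, hBind⟩ := hBmem
  have hX : ∀ x ∈ Y \ B, ∃ S ∈ L, x ∈ S ∧ (B ∩ S).card = σ S := by
    intro x hx
    rw [Finset.mem_sdiff] at hx
    refine tight_of_not_ind E L σ hBind (hY hx.1) ?_
    intro hins
    have : insert x B ∈ Y.powerset.filter (fun I => LInd E L σ I) := by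
      rw [Finset.mem_filter, Finset.mem_powerset]
      exact ⟨Finset.insert_subset hx.1 hBY, hins⟩
    have := hBmax _ this
    rw [Finset.card_insert_of_notMem hx.2] at this
    omega
  obtain ⟨T, hT, hYBT, hTt⟩ :=
    tight_cover E L hE hempty hsub hinter σ hσ0 hsubmod hBind _ hX
  have hBTY : B \ T = Y \ T := by
    apply Finset.Subset.antisymm
    · exact Finset.sdiff_subset_sdiff hBY (Finset.Subset.refl _)
    · intro y hy
      rw [Finset.mem_sdiff] at hy ⊢
      refine ⟨?_, hy.2⟩
      by_contra hyB
      exact hy.2 (hYBT (Finset.mem_sdiff.mpr ⟨hy.1, hyB⟩))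
  have hBcard : B.card = σ T + (Y \ T).card := by
    have := Finset.card_inter_add_card_sdiff B T
    rw [hTt, hBTY] at this
    omega
  refine ⟨T, hT, le_antisymm (part1 T hT) ?_⟩
  · rw [← hBcard]
    unfold Matroid.rank'
    apply le_csSup
    · refine ⟨Y.card, ?_⟩
      rintro n ⟨Iset, ⟨hIi, hIY⟩, rfl⟩
      obtain ⟨I, rfl, hIE, hIσ⟩ := (hIndep Iset).mp hIi
      rw [Set.ncard_coe_finset]
      exact Finset.card_le_card (Finset.coe_subset.mp hIY)
    · refine ⟨↑B, ⟨(hIndep ↑B).mpr ⟨B, rfl, hBind.1, hBind.2⟩, Finset.coe_subset.mpr hBY⟩, ?_⟩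
      exact Set.ncard_coe_finset B
end
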